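/- arXiv:2010.04781 — 2 statements merged into one kernel-verified Lean document; each statement's English description precedes it below -/
import Mathlib

section
/- Let X ⊆ ℝ^n be nonempty closed convex, f convex differentiable with ‖∇f(w)‖ ≤ L for all w, a ∈ ℝ^m a stochastic vector, x^1,…,x^m ∈ ℝ^n, v = Σ_j a_j x^j, α > 0, d = ∇f(v), x⁺ = P_X[v − αd], and φ = x⁺ − v + αd. Then for all z ∈ X: ‖x⁺ − z‖² ≤ Σ_j a_j‖x^j − z‖² + α²‖d‖² − 2α(f(v) − f(z)) − ‖φ‖². -/
/-!
Write `y = v - α d`, so that `x⁺` is the nearest point of `X` to `y` and `φ = x⁺ - y`. Because `X`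
is convex, the angle at `x⁺` between `y` and any `z ∈ X` is obtuse, which gives
`‖x⁺ - z‖² ≤ ‖y - z‖² - ‖φ‖²`. Expanding `‖y - z‖² = ‖v - z‖² - 2α⟪d, v - z⟫ + α²‖d‖²`, the
gradient inequality `f v - f z ≤ ⟪d, v - z⟫` handles the middle term and Jensen's inequality for
the convex function `‖· - z‖²` bounds `‖v - z‖²` by `∑ⱼ aⱼ ‖xʲ - z‖²`.
-/

open InnerProductSpace Set AffineMap

section
variable {F : Type*} [NormedAddCommGroup F]

theorem norm_sub_eq_iInf_of_forall_dist_le {K : Set F} {y p : F} (hp : p ∈ K)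
    (hmin : ∀ w ∈ K, dist y p ≤ dist y w) : ‖y - p‖ = ⨅ w : K, ‖y - w‖ := by
  have : Nonempty K := ⟨⟨p, hp⟩⟩
  refine le_antisymm (le_ciInf fun w => by simpa [dist_eq_norm] using hmin w w.2) ?_
  exact ciInf_le ⟨0, by rintro _ ⟨w, rfl⟩; exact norm_nonneg _⟩ (⟨p, hp⟩ : K)

variable [InnerProductSpace ℝ F]

theorem Convex.norm_sub_sq_add_norm_sub_sq_le {K : Set F} (hK : Convex ℝ K) {y p z : F}
    (hp : p ∈ K) (hmin : ∀ w ∈ K, dist y p ≤ dist y w) (hz : z ∈ K) :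
    ‖p - z‖ ^ 2 + ‖y - p‖ ^ 2 ≤ ‖y - z‖ ^ 2 := by
  have hobtuse : ⟪y - p, z - p⟫_ℝ ≤ 0 :=
    (norm_eq_iInf_iff_real_inner_le_zero hK hp).mp
      (norm_sub_eq_iInf_of_forall_dist_le hp hmin) z hz
  rw [norm_sub_rev p z, show y - z = (y - p) - (z - p) by abel,
    norm_sub_sq_real (y - p) (z - p)]
  linarith

theorem ConvexOn.inner_gradient_le_sub [CompleteSpace F] {s : Set F} {f : F → ℝ}
    (hf : ConvexOn ℝ s f) {v z g : F} (hv : v ∈ s) (hz : z ∈ s) (hg : HasGradientAt f g v) :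
    ⟪g, z - v⟫_ℝ ≤ f z - f v := by
  have hline : ConvexOn ℝ (lineMap v z ⁻¹' s) (f ∘ (lineMap v z : ℝ →ᵃ[ℝ] F)) :=
    hf.comp_affineMap _
  have hderiv : HasDerivAt (f ∘ (lineMap v z : ℝ →ᵃ[ℝ] F)) ⟪g, z - v⟫_ℝ 0 := by
    have hg' : HasFDerivAt f (toDual ℝ F g) (lineMap v z (0 : ℝ)) := by
      simpa using hg.hasFDerivAt
    simpa using hg'.comp_hasDerivAt (0 : ℝ) hasDerivAt_lineMap
  simpa [slope] using
    hline.le_slope_of_hasDerivAt (by simpa using hv) (by simpa using hz) one_pos hderiv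

theorem norm_sum_smul_sub_sq_le {ι : Type*} {t : Finset ι} {a : ι → ℝ}
    (ha : ∀ j ∈ t, 0 ≤ a j) (hsum : ∑ j ∈ t, a j = 1) (x : ι → F) (z : F) :
    ‖∑ j ∈ t, a j • x j - z‖ ^ 2 ≤ ∑ j ∈ t, a j * ‖x j - z‖ ^ 2 := by
  have hcenter : ∑ j ∈ t, a j • x j - z = ∑ j ∈ t, a j • (x j - z) := by
    simp only [smul_sub, Finset.sum_sub_distrib, ← Finset.sum_smul, hsum, one_smul]
  rw [hcenter]
  exact (convexOn_univ_norm.pow (fun _ _ => norm_nonneg _) 2).map_sum_le ha hsum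
    fun _ _ => mem_univ _

end

theorem stmt_8_general {m n : ℕ} (X : Set (EuclideanSpace ℝ (Fin n)))
    (hconv : Convex ℝ X)
    (f : EuclideanSpace ℝ (Fin n) → ℝ) (hf : ConvexOn ℝ Set.univ f)
    (g : EuclideanSpace ℝ (Fin n) → EuclideanSpace ℝ (Fin n))
    (hg : ∀ w, HasGradientAt f (g w) w)
    (a : Fin m → ℝ) (ha : ∀ j, 0 ≤ a j) (hsum : ∑ j, a j = 1)
    (x : Fin m → EuclideanSpace ℝ (Fin n))
    (v : EuclideanSpace ℝ (Fin n)) (hv : v = ∑ j, a j • x j)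
    (α : ℝ) (hα : 0 < α)
    (d : EuclideanSpace ℝ (Fin n)) (hd : d = g v)
    (xp : EuclideanSpace ℝ (Fin n)) (hxpX : xp ∈ X)
    (hproj : ∀ w ∈ X, dist (v - α • d) xp ≤ dist (v - α • d) w)
    (φ : EuclideanSpace ℝ (Fin n)) (hφ : φ = xp - v + α • d) :
    ∀ z ∈ X, ‖xp - z‖ ^ 2 ≤ ∑ j, a j * ‖x j - z‖ ^ 2 + α ^ 2 * ‖d‖ ^ 2
      - 2 * α * (f v - f z) - ‖φ‖ ^ 2 := by
  intro z hz
  have hobtuse := hconv.norm_sub_sq_add_norm_sub_sq_le hxpX hproj hz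
  have hgrad : ⟪d, z - v⟫_ℝ ≤ f z - f v :=
    hf.inner_gradient_le_sub (mem_univ v) (mem_univ z) (hd ▸ hg v)
  have hjensen : ‖v - z‖ ^ 2 ≤ ∑ j, a j * ‖x j - z‖ ^ 2 :=
    hv ▸ norm_sum_smul_sub_sq_le (fun j _ => ha j) hsum x z
  have hφ_norm : ‖φ‖ = ‖v - α • d - xp‖ := by
    rw [hφ, ← norm_neg]
    congr 1
    abel
  have hexpand :
      ‖v - α • d - z‖ ^ 2 = ‖v - z‖ ^ 2 + 2 * α * ⟪d, z - v⟫_ℝ + α ^ 2 * ‖d‖ ^ 2 := by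
    rw [show v - α • d - z = -((z - v) + α • d) by abel, norm_neg, norm_add_sq_real,
      inner_smul_right, norm_smul, real_inner_comm, Real.norm_eq_abs, mul_pow, sq_abs,
      norm_sub_rev z v]
    ring
  rw [hφ_norm]
  nlinarith [mul_le_mul_of_nonneg_left hgrad hα.le]

theorem stmt_8 {m n : ℕ} (X : Set (EuclideanSpace ℝ (Fin n)))
    (hne : X.Nonempty) (hcl : IsClosed X) (hconv : Convex ℝ X)
    (f : EuclideanSpace ℝ (Fin n) → ℝ) (hf : ConvexOn ℝ Set.univ f)
    (g : EuclideanSpace ℝ (Fin n) → EuclideanSpace ℝ (Fin n))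
    (hg : ∀ w, HasGradientAt f (g w) w)
    (L : ℝ) (hL : ∀ w, ‖g w‖ ≤ L)
    (a : Fin m → ℝ) (ha : ∀ j, 0 ≤ a j) (hsum : ∑ j, a j = 1)
    (x : Fin m → EuclideanSpace ℝ (Fin n))
    (v : EuclideanSpace ℝ (Fin n)) (hv : v = ∑ j, a j • x j)
    (α : ℝ) (hα : 0 < α)
    (d : EuclideanSpace ℝ (Fin n)) (hd : d = g v)
    (xp : EuclideanSpace ℝ (Fin n)) (hxpX : xp ∈ X)
    (hproj : ∀ w ∈ X, dist (v - α • d) xp ≤ dist (v - α • d) w)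
    (φ : EuclideanSpace ℝ (Fin n)) (hφ : φ = xp - v + α • d) :
    ∀ z ∈ X, ‖xp - z‖ ^ 2 ≤ ∑ j, a j * ‖x j - z‖ ^ 2 + α ^ 2 * ‖d‖ ^ 2
      - 2 * α * (f v - f z) - ‖φ‖ ^ 2 :=
  stmt_8_general X hconv f hf g hg a ha hsum x v hv α hα d hd xp hxpX hproj φ hφ
end

section
/- Let g : ℝ^n → ℝ be continuous, X ⊆ ℝ^n compact, and X* = {x ∈ X : g(x) = inf_{X} g} the (nonempty) set of minimizers. Suppose (y_k) is a sequence in X such that (i) liminf_k g(y_k) = inf_X g, and (ii) for every x* ∈ X*, the sequence ‖y_k − x*‖ converges. Then (y_k) converges to some point of X*. -/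
/-!
Compactness gives a cluster point `x` of `(y k)` along which `g (y k)` approaches its lower
limit, the infimum of `g` on `X`; continuity makes `x` a minimizer. Since `‖y k - x‖`
converges and is small along that cluster point, its limit is `0`.
-/

open Filter Topology

theorem MapClusterPt.eq_of_tendsto {α β : Type*} [TopologicalSpace β] [T2Space β] {l : Filter α}
    {u : α → β} {a b : β} (ha : MapClusterPt a l u) (hb : Tendsto u l (𝓝 b)) : a = b :=
  eq_of_nhds_neBot <| ha.clusterPt.mono hb

theorem Bornology.IsBounded.mapClusterPt_liminf {ι : Type*} {l : Filter ι} [NeBot l] {u : ι → ℝ}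
    {S : Set ℝ} (hS : Bornology.IsBounded S) (hu : ∀ᶠ k in l, u k ∈ S) :
    MapClusterPt (liminf u l) l u :=
  have hle : IsBoundedUnder (· ≤ ·) l u :=
    isBoundedUnder_of_eventually_le (hu.mono fun _ hk => le_csSup hS.bddAbove hk)
  have hge : IsBoundedUnder (· ≥ ·) l u :=
    isBoundedUnder_of_eventually_ge (hu.mono fun _ hk => csInf_le hS.bddBelow hk)
  MapClusterPt.liminf hle.isCoboundedUnder_flip hge

theorem IsCompact.exists_mapClusterPt_of_mapClusterPt_comp {α β ι : Type*} [TopologicalSpace α]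
    [TopologicalSpace β] [T2Space β] {X : Set α} {g : α → β} {l : Filter ι} {y : ι → α} {a : β}
    (hX : IsCompact X) (hg : ContinuousOn g X) (hy : ∀ᶠ k in l, y k ∈ X)
    (ha : MapClusterPt a l (g ∘ y)) : ∃ x ∈ X, g x = a ∧ MapClusterPt x l y := by
  -- Restrict `l` to the indices where `g (y k)` is close to `a`, then use compactness there.
  set l' := l ⊓ comap (g ∘ y) (𝓝 a)
  have : NeBot l' := neBot_inf_comap_iff_map.2 (by rwa [inf_comm])
  have hyX : map y l' ≤ 𝓟 X := le_principal_iff.2 (mem_map.2 (mem_inf_of_left hy))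
  obtain ⟨x, hxX, hx⟩ := hX.exists_mapClusterPt hyX
  refine ⟨x, hxX, ?_, hx.mono inf_le_left⟩
  have hgx : MapClusterPt (g x) l' (g ∘ y) :=
    hx.tendsto_comp' ((hg x hxX).mono_left (inf_le_inf_left _ hyX))
  exact hgx.eq_of_tendsto (tendsto_comap.mono_left inf_le_right)

theorem MapClusterPt.tendsto_of_tendsto_dist {α ι : Type*} [PseudoMetricSpace α] {l : Filter ι}
    {y : ι → α} {x : α} {c : ℝ} (hx : MapClusterPt x l y)
    (hc : Tendsto (fun k => dist (y k) x) l (𝓝 c)) : Tendsto y l (𝓝 x) := by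
  have h0 : MapClusterPt (dist x x) l (fun k => dist (y k) x) :=
    hx.continuousAt_comp (continuous_id.dist continuous_const).continuousAt
  rw [dist_self] at h0
  exact tendsto_iff_dist_tendsto_zero.2 (h0.eq_of_tendsto hc ▸ hc)

theorem stmt_11_general {n : ℕ} (g : EuclideanSpace ℝ (Fin n) → ℝ)
    (hg : Continuous g) (X : Set (EuclideanSpace ℝ (Fin n)))
    (hX : IsCompact X)
    (Xstar : Set (EuclideanSpace ℝ (Fin n)))
    (hXstar : Xstar = {x ∈ X | ∀ z ∈ X, g x ≤ g z})
    (y : ℕ → EuclideanSpace ℝ (Fin n)) (hy : ∀ k, y k ∈ X)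
    (hliminf : Filter.liminf (fun k => g (y k)) Filter.atTop = sInf (g '' X))
    (hdist : ∀ xs ∈ Xstar, ∃ c : ℝ,
      Tendsto (fun k => ‖y k - xs‖) atTop (nhds c)) :
    ∃ xs ∈ Xstar, Tendsto y atTop (nhds xs) := by
  have hbdd : Bornology.IsBounded (g '' X) := (hX.image hg).isBounded
  have hclus : MapClusterPt (sInf (g '' X)) atTop (g ∘ y) :=
    hliminf ▸ hbdd.mapClusterPt_liminf (Eventually.of_forall fun k => ⟨y k, hy k, rfl⟩)
  obtain ⟨x, hxX, hgx, hx⟩ :=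
    hX.exists_mapClusterPt_of_mapClusterPt_comp hg.continuousOn (Eventually.of_forall hy) hclus
  have hxs : x ∈ Xstar := hXstar ▸ ⟨hxX, fun z hz => hgx ▸ csInf_le hbdd.bddBelow ⟨z, hz, rfl⟩⟩
  obtain ⟨c, hc⟩ := hdist x hxs
  exact ⟨x, hxs, hx.tendsto_of_tendsto_dist (c := c) (by simpa only [dist_eq_norm] using hc)⟩

theorem stmt_11 {n : ℕ} (g : EuclideanSpace ℝ (Fin n) → ℝ)
    (hg : Continuous g) (X : Set (EuclideanSpace ℝ (Fin n)))
    (hX : IsCompact X)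
    (Xstar : Set (EuclideanSpace ℝ (Fin n)))
    (hXstar : Xstar = {x ∈ X | ∀ z ∈ X, g x ≤ g z})
    (hXsne : Xstar.Nonempty)
    (y : ℕ → EuclideanSpace ℝ (Fin n)) (hy : ∀ k, y k ∈ X)
    (hliminf : Filter.liminf (fun k => g (y k)) Filter.atTop = sInf (g '' X))
    (hdist : ∀ xs ∈ Xstar, ∃ c : ℝ,
      Tendsto (fun k => ‖y k - xs‖) atTop (nhds c)) :
    ∃ xs ∈ Xstar, Tendsto y atTop (nhds xs) :=
  stmt_11_general g hg X hX Xstar hXstar y hy hliminf hdist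
end
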